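/- arXiv:2007.14115 — 4 statements merged into one kernel-verified Lean document; each statement's English description precedes it below -/
import Mathlib

section
/- Let s, t, α be positive integers and let G be a finite abelian group with line set 𝓛 making (G,𝓛) a partial geometry pg(s,t,α) admitting G as an abelian Singer group (axioms (i)–(v) of the encoding). Let L₀, L₁, …, L_t be the t+1 lines of 𝓛 containing the identity e. Then D = (L₀ ∪ L₁ ∪ ⋯ ∪ L_t) \ {e} is a regular partial difference set in G with parameters v = (s+1)(st+α)/α, k = s(t+1), λ = s − 1 + t(α−1), μ = α(t+1). -/
/-- `D` is a `(v,k,λ,μ)` partial difference set in the finite group `G` (written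
multiplicatively): `|G| = v`, `|D| = k`, every non-identity element of `D` is represented
exactly `lam` times as `g * h⁻¹` with `g h ∈ D`, `g ≠ h`, and every non-identity element
of `G` not in `D` exactly `mu` times. -/
def IsPDS {G : Type*} [Group G] (D : Set G) (v k lam mu : ℕ) : Prop :=
  Nat.card G = v ∧ D.ncard = k ∧
  (∀ z : G, z ≠ 1 → z ∈ D →
    {p : G × G | p.1 ∈ D ∧ p.2 ∈ D ∧ p.1 ≠ p.2 ∧ p.1 * p.2⁻¹ = z}.ncard = lam) ∧
  (∀ z : G, z ≠ 1 → z ∉ D →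
    {p : G × G | p.1 ∈ D ∧ p.2 ∈ D ∧ p.1 ≠ p.2 ∧ p.1 * p.2⁻¹ = z}.ncard = mu)

/-- `D` is regular: it avoids the identity and is closed under inversion. -/
def IsRegularPDS {G : Type*} [Group G] (D : Set G) : Prop :=
  (1 : G) ∉ D ∧ ∀ g ∈ D, g⁻¹ ∈ D

/-- Encoding of a partial geometry `pg(s,t,α)` whose point set is the abelian group `G`,
admitting `G` (acting by translation) as an abelian Singer group; the lines are the finite
subsets of `G` collected in `𝓛`.  Axioms (i)–(v). -/
structure IsPGSinger (G : Type*) [CommGroup G] [DecidableEq G]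
    (𝓛 : Set (Finset G)) (s t α : ℕ) : Prop where
  /-- (i) every line has exactly `s+1` points -/
  line_card : ∀ L ∈ 𝓛, L.card = s + 1
  /-- (ii) every point lies on exactly `t+1` lines -/
  point_deg : ∀ x : G, {L | L ∈ 𝓛 ∧ x ∈ L}.ncard = t + 1
  /-- (iii) two distinct lines share at most one point -/
  line_inter : ∀ L ∈ 𝓛, ∀ M ∈ 𝓛, L ≠ M → ((L : Set G) ∩ (M : Set G)).ncard ≤ 1
  /-- (iv) for a non-incident point–line pair `(x,L)`, exactly `α` lines through `x` meet `L` -/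
  alpha_ax : ∀ x : G, ∀ L ∈ 𝓛, x ∉ L →
    {M | M ∈ 𝓛 ∧ x ∈ M ∧ ∃ y ∈ L, y ∈ M}.ncard = α
  /-- (v) the line set is closed under translation by elements of `G` -/
  translate : ∀ g : G, ∀ L ∈ 𝓛, L.image (fun y => g * y) ∈ 𝓛

/-!
The collinearity graph of a partial geometry `pg(s,t,α)` is strongly regular with parameters
`(v, s(t+1), s-1+t(α-1), α(t+1))`: the neighbours of a point are split by the `t+1` lines
through it, and a line not through `x` carries exactly `α` points collinear with `x`.
Double counting collinear pairs `(y, q)` with `y` off and `q` on a fixed line gives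
`α v = (s+1)(st+α)`. When `G` acts by translations, the graph is a Cayley graph of `G` with
connection set `D`, and the representations `z = g h⁻¹` with `g, h ∈ D` correspond to the common
neighbours of `1` and `z⁻¹`; so the strongly regular parameters are the difference-set parameters.
-/

open Finset

theorem SimpleGraph.card_commonNeighbors_eq_card_filter {V : Type*} [Fintype V]
    (Γ : SimpleGraph V) [DecidableRel Γ.Adj] (v w : V) :
    Fintype.card (Γ.commonNeighbors v w) = #{u | Γ.Adj v u ∧ Γ.Adj w u} := by
  rw [← Set.toFinset_card]
  congr 1
  ext u
  simp [SimpleGraph.mem_commonNeighbors]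

namespace PartialGeometry

variable {G : Type*}

def collinearityGraph (𝓛 : Set (Finset G)) : SimpleGraph G where
  Adj a b := a ≠ b ∧ ∃ L ∈ 𝓛, a ∈ L ∧ b ∈ L
  symm := ⟨fun _ _ ⟨hab, L, hL, ha, hb⟩ => ⟨hab.symm, L, hL, hb, ha⟩⟩
  loopless := ⟨fun _ h => h.1 rfl⟩

@[simp]
theorem collinearityGraph_adj {𝓛 : Set (Finset G)} {a b : G} :
    (collinearityGraph 𝓛).Adj a b ↔ a ≠ b ∧ ∃ L ∈ 𝓛, a ∈ L ∧ b ∈ L :=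
  Iff.rfl

open Classical in
noncomputable def pencil [Fintype G] (𝓛 : Set (Finset G)) (p : G) : Finset (Finset G) :=
  {L | L ∈ 𝓛 ∧ p ∈ L}

@[simp]
theorem mem_pencil [Fintype G] {𝓛 : Set (Finset G)} {p : G} {L : Finset G} :
    L ∈ pencil 𝓛 p ↔ L ∈ 𝓛 ∧ p ∈ L := by
  simp [pencil]

end PartialGeometry

namespace IsPGSinger

open PartialGeometry

variable {G : Type*} [CommGroup G] [DecidableEq G] {𝓛 : Set (Finset G)} {s t α : ℕ}
  (hpg : IsPGSinger G 𝓛 s t α)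
include hpg

theorem line_eq_of_mem {a b : G} {L M : Finset G} (hL : L ∈ 𝓛) (hM : M ∈ 𝓛) (hab : a ≠ b)
    (haL : a ∈ L) (hbL : b ∈ L) (haM : a ∈ M) (hbM : b ∈ M) : L = M := by
  by_contra hLM
  exact hab <| (Set.ncard_le_one (Set.toFinite _)).mp (hpg.line_inter L hL M hM hLM)
    a ⟨haL, haM⟩ b ⟨hbL, hbM⟩

theorem collinearityGraph_adj_mul_iff (g a b : G) :
    (collinearityGraph 𝓛).Adj (g * a) (g * b) ↔ (collinearityGraph 𝓛).Adj a b := by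
  have key : ∀ (g a b : G), (collinearityGraph 𝓛).Adj a b →
      (collinearityGraph 𝓛).Adj (g * a) (g * b) := fun g a b ⟨hab, L, hL, ha, hb⟩ =>
    ⟨by simpa using hab, L.image (g * ·), hpg.translate g L hL, mem_image_of_mem _ ha,
      mem_image_of_mem _ hb⟩
  exact ⟨fun h => by simpa using key g⁻¹ _ _ h, key g a b⟩

theorem card_filter_adj_of_notMem [DecidableRel (collinearityGraph 𝓛).Adj] {x : G}
    {L : Finset G} (hL : L ∈ 𝓛) (hx : x ∉ L) :
    #(L.filter ((collinearityGraph 𝓛).Adj x)) = α := by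
  rw [← hpg.alpha_ax x L hL hx, ← Set.ncard_coe_finset]
  symm
  -- a line through `x` meeting `L` is sent to its unique point on `L`
  refine Set.ncard_congr (fun M hM => hM.2.2.choose) ?_ ?_ ?_
  · rintro M ⟨hM, hxM, hmeet⟩
    obtain ⟨hyL, hyM⟩ := hmeet.choose_spec
    simp only [coe_filter, Set.mem_ofPred_eq, collinearityGraph_adj]
    exact ⟨hyL, (ne_of_mem_of_not_mem hyL hx).symm, M, hM, hxM, hyM⟩
  · rintro M M' ⟨hM, hxM, hmeet⟩ ⟨hM', hxM', hmeet'⟩ heq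
    obtain ⟨hyL, hyM⟩ := hmeet.choose_spec
    obtain ⟨-, hyM'⟩ := hmeet'.choose_spec
    exact hpg.line_eq_of_mem hM hM' (ne_of_mem_of_not_mem hyL hx).symm hxM hyM hxM'
      (heq ▸ hyM')
  · intro y hy
    simp only [coe_filter, Set.mem_ofPred_eq, collinearityGraph_adj] at hy
    obtain ⟨hyL, -, M, hM, hxM, hyM⟩ := hy
    have hmeet : ∃ y ∈ L, y ∈ M := ⟨y, hyL, hyM⟩
    refine ⟨M, ⟨hM, hxM, hmeet⟩, ?_⟩
    obtain ⟨hy'L, hy'M⟩ := hmeet.choose_spec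
    by_contra hne
    exact hx (hpg.line_eq_of_mem hL hM hne hy'L hyL hy'M hyM ▸ hxM)

variable [Fintype G]

theorem card_pencil (p : G) : #(pencil 𝓛 p) = t + 1 := by
  rw [← hpg.point_deg p, ← Set.ncard_coe_finset]
  congr 1
  ext L
  simp

theorem card_filter_adj_and_eq_sum [DecidableRel (collinearityGraph 𝓛).Adj] (p : G)
    (Q : G → Prop) [DecidablePred Q] :
    #{h | (collinearityGraph 𝓛).Adj p h ∧ Q h} = ∑ L ∈ pencil 𝓛 p, #((L.erase p).filter Q) := by
  have hunion : ({h | (collinearityGraph 𝓛).Adj p h ∧ Q h} : Finset G) =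
      (pencil 𝓛 p).biUnion (fun L => (L.erase p).filter Q) := by
    ext h
    simp only [mem_filter, mem_univ, true_and, collinearityGraph_adj, mem_biUnion, mem_pencil,
      mem_erase]
    constructor
    · rintro ⟨⟨hph, L, hL, hpL, hhL⟩, hQ⟩
      exact ⟨L, ⟨hL, hpL⟩, ⟨Ne.symm hph, hhL⟩, hQ⟩
    · rintro ⟨L, ⟨hL, hpL⟩, ⟨hhp, hhL⟩, hQ⟩
      exact ⟨⟨Ne.symm hhp, L, hL, hpL, hhL⟩, hQ⟩
  rw [hunion, card_biUnion]
  intro L hL M hM hLM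
  simp only [mem_coe, mem_pencil] at hL hM
  refine disjoint_left.mpr fun h hhL hhM => hLM ?_
  simp only [mem_filter, mem_erase] at hhL hhM
  exact hpg.line_eq_of_mem hL.1 hM.1 hhL.1.1.symm hL.2 hhL.1.2 hM.2 hhM.1.2

theorem sum_pencil_eq_add {L₀ : Finset G} {p : G} (hL₀ : L₀ ∈ 𝓛) (hp : p ∈ L₀)
    (f : Finset G → ℕ) {b : ℕ} (hf : ∀ L ∈ 𝓛, p ∈ L → L ≠ L₀ → f L = b) :
    ∑ L ∈ pencil 𝓛 p, f L = f L₀ + t * b := by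
  have hmem : L₀ ∈ pencil 𝓛 p := mem_pencil.mpr ⟨hL₀, hp⟩
  rw [← add_sum_erase _ _ hmem, sum_const_nat fun L hL => ?_, card_erase_of_mem hmem,
    hpg.card_pencil, Nat.add_sub_cancel]
  obtain ⟨hne, hL⟩ := mem_erase.mp hL
  exact hf L (mem_pencil.mp hL).1 (mem_pencil.mp hL).2 hne

theorem degree_collinearityGraph [DecidableRel (collinearityGraph 𝓛).Adj] (p : G) :
    (collinearityGraph 𝓛).degree p = s * (t + 1) := by
  have h := hpg.card_filter_adj_and_eq_sum p (fun _ => True)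
  simp only [and_true, filter_true] at h
  rw [← SimpleGraph.card_neighborFinset_eq_degree, SimpleGraph.neighborFinset_eq_filter, h,
    sum_const_nat fun L hL => ?_, hpg.card_pencil, mul_comm]
  rw [card_erase_of_mem (mem_pencil.mp hL).2, hpg.line_card _ (mem_pencil.mp hL).1,
    Nat.add_sub_cancel]

theorem card_commonNeighbors_of_adj [DecidableRel (collinearityGraph 𝓛).Adj] {p x : G}
    (hadj : (collinearityGraph 𝓛).Adj p x) :
    #{h | (collinearityGraph 𝓛).Adj p h ∧ (collinearityGraph 𝓛).Adj x h} =
      s - 1 + t * (α - 1) := by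
  obtain ⟨hpx, L₀, hL₀, hpL₀, hxL₀⟩ := hadj
  rw [hpg.card_filter_adj_and_eq_sum, hpg.sum_pencil_eq_add hL₀ hpL₀ _ (b := α - 1)]
  · have hfilter : (L₀.erase p).filter ((collinearityGraph 𝓛).Adj x) = (L₀.erase p).erase x := by
      ext h
      simp only [mem_filter, mem_erase, collinearityGraph_adj]
      exact ⟨fun ⟨hhL₀, ⟨hxh, _⟩⟩ => ⟨Ne.symm hxh, hhL₀⟩,
        fun ⟨hhx, hhL₀⟩ => ⟨hhL₀, Ne.symm hhx, L₀, hL₀, hxL₀, hhL₀.2⟩⟩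
    rw [hfilter, card_erase_of_mem (mem_erase.mpr ⟨hpx.symm, hxL₀⟩), card_erase_of_mem hpL₀,
      hpg.line_card _ hL₀]
    omega
  · intro L hL hpL hne
    have hxL : x ∉ L := fun hxL => hne (hpg.line_eq_of_mem hL hL₀ hpx hpL hxL hpL₀ hxL₀)
    have hxp : (collinearityGraph 𝓛).Adj x p := ⟨hpx.symm, L₀, hL₀, hxL₀, hpL₀⟩
    rw [filter_erase, card_erase_of_mem (mem_filter.mpr ⟨hpL, hxp⟩),
      hpg.card_filter_adj_of_notMem hL hxL]

theorem card_commonNeighbors_of_not_adj [DecidableRel (collinearityGraph 𝓛).Adj] {p x : G}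
    (hpx : p ≠ x) (hadj : ¬(collinearityGraph 𝓛).Adj p x) :
    #{h | (collinearityGraph 𝓛).Adj p h ∧ (collinearityGraph 𝓛).Adj x h} = α * (t + 1) := by
  rw [hpg.card_filter_adj_and_eq_sum, sum_const_nat fun L hL => ?_, hpg.card_pencil, mul_comm]
  obtain ⟨hL, hpL⟩ := mem_pencil.mp hL
  have hxL : x ∉ L := fun hxL => hadj ⟨hpx, L, hL, hpL, hxL⟩
  have hp : p ∉ L.filter ((collinearityGraph 𝓛).Adj x) := fun h => hadj (mem_filter.mp h).2.symm
  rw [filter_erase, erase_eq_of_notMem hp, hpg.card_filter_adj_of_notMem hL hxL]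

theorem mul_card_eq : α * Fintype.card G = (s + 1) * (s * t + α) := by
  classical
  -- count collinear pairs `(y, q)` with `y ∉ L₀`, `q ∈ L₀`: each `y` sees `α` points of `L₀`,
  -- each `q` sees `t * s` points off `L₀`
  obtain ⟨L₀, hL₀⟩ : (pencil 𝓛 (1 : G)).Nonempty := card_pos.mp (by rw [hpg.card_pencil]; omega)
  replace hL₀ := (mem_pencil.mp hL₀).1
  have hdouble := card_mul_eq_card_mul (collinearityGraph 𝓛).Adj (s := L₀ᶜ) (t := L₀)
    (m := α) (n := t * s) (fun y hy => hpg.card_filter_adj_of_notMem hL₀ (mem_compl.mp hy))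
    (fun q hq => ?_)
  · rw [card_compl, hpg.line_card _ hL₀] at hdouble
    have hle : s + 1 ≤ Fintype.card G := hpg.line_card _ hL₀ ▸ card_le_univ L₀
    calc α * Fintype.card G = (Fintype.card G - (s + 1)) * α + α * (s + 1) := by
          rw [mul_comm _ α, ← mul_add, Nat.sub_add_cancel hle]
      _ = (s + 1) * (s * t + α) := by rw [hdouble]; ring
  · have hbelow : L₀ᶜ.bipartiteBelow (collinearityGraph 𝓛).Adj q =
        ({h | (collinearityGraph 𝓛).Adj q h ∧ h ∉ L₀} : Finset G) := by
      ext h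
      simp only [mem_bipartiteBelow, mem_compl, mem_filter, mem_univ, true_and]
      rw [(collinearityGraph 𝓛).adj_comm]
      exact and_comm
    rw [hbelow, hpg.card_filter_adj_and_eq_sum, hpg.sum_pencil_eq_add hL₀ hq _ (b := s)]
    · rw [filter_false_of_mem fun h hh => not_not.mpr (mem_of_mem_erase hh), card_empty,
        zero_add]
    · intro M hM hqM hne
      have hdisj : ∀ h ∈ M.erase q, h ∉ L₀ := fun h hh hhL₀ =>
        hne (hpg.line_eq_of_mem hM hL₀ (mem_erase.mp hh).1 (mem_erase.mp hh).2 hqM hhL₀ hq)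
      rw [filter_true_of_mem hdisj, card_erase_of_mem hqM, hpg.line_card _ hM,
        Nat.add_sub_cancel]

theorem isSRGWith_collinearityGraph [DecidableRel (collinearityGraph 𝓛).Adj] :
    (collinearityGraph 𝓛).IsSRGWith (Fintype.card G) (s * (t + 1)) (s - 1 + t * (α - 1))
      (α * (t + 1)) where
  card := rfl
  regular := hpg.degree_collinearityGraph
  of_adj p x hadj := by
    rw [SimpleGraph.card_commonNeighbors_eq_card_filter, hpg.card_commonNeighbors_of_adj hadj]
  of_not_adj p x hpx hadj := by
    rw [SimpleGraph.card_commonNeighbors_eq_card_filter,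
      hpg.card_commonNeighbors_of_not_adj hpx hadj]

end IsPGSinger

theorem ncard_pairs_mul_inv_eq {G : Type*} [Group G] (D : Set G) {z : G} (hz : z ≠ 1) :
    {p : G × G | p.1 ∈ D ∧ p.2 ∈ D ∧ p.1 ≠ p.2 ∧ p.1 * p.2⁻¹ = z}.ncard =
      {h | h ∈ D ∧ z * h ∈ D}.ncard := by
  have himage : (fun h => (z * h, h)) '' {h | h ∈ D ∧ z * h ∈ D} =
      {p : G × G | p.1 ∈ D ∧ p.2 ∈ D ∧ p.1 ≠ p.2 ∧ p.1 * p.2⁻¹ = z} := by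
    ext ⟨g, h⟩
    simp only [Set.mem_image, Set.mem_ofPred_eq, Prod.mk.injEq]
    constructor
    · rintro ⟨h, ⟨hh, hzh⟩, rfl, rfl⟩
      exact ⟨hzh, hh, fun he => hz (mul_eq_right.mp he), mul_inv_cancel_right z h⟩
    · rintro ⟨hg, hh, -, rfl⟩
      exact ⟨h, ⟨hh, by rwa [inv_mul_cancel_right]⟩, inv_mul_cancel_right _ _, rfl⟩
  rw [← himage, Set.ncard_image_of_injective _ fun a b hab => (Prod.mk.inj hab).2]

namespace SimpleGraph

variable {G : Type*} [Group G] {Γ : SimpleGraph G} (hΓ : ∀ g a b, Γ.Adj (g * a) (g * b) ↔ Γ.Adj a b)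
include hΓ

theorem adj_one_inv_iff {g : G} : Γ.Adj 1 g⁻¹ ↔ Γ.Adj 1 g := by
  rw [← hΓ g, mul_one, mul_inv_cancel, Γ.adj_comm]

theorem setOf_mem_neighborSet_one_and_mul_mem (z : G) :
    {h | h ∈ Γ.neighborSet 1 ∧ z * h ∈ Γ.neighborSet 1} = Γ.commonNeighbors 1 z⁻¹ := by
  ext h
  rw [Set.mem_ofPred_eq, mem_commonNeighbors, mem_neighborSet, mem_neighborSet,
    ← hΓ z⁻¹ 1 (z * h), mul_one, inv_mul_cancel_left]

theorem isRegularPDS_neighborSet_one : IsRegularPDS (Γ.neighborSet 1) :=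
  ⟨Γ.loopless.irrefl 1, fun _ hg => (adj_one_inv_iff hΓ).mpr hg⟩

theorem IsSRGWith.isPDS_neighborSet_one [Fintype G] [DecidableRel Γ.Adj]
    {n k ℓ μ : ℕ} (hsrg : Γ.IsSRGWith n k ℓ μ) : IsPDS (Γ.neighborSet 1) n k ℓ μ := by
  have hcount : ∀ z : G, z ≠ 1 →
      {p : G × G | p.1 ∈ Γ.neighborSet 1 ∧ p.2 ∈ Γ.neighborSet 1 ∧ p.1 ≠ p.2 ∧
        p.1 * p.2⁻¹ = z}.ncard = Fintype.card (Γ.commonNeighbors 1 z⁻¹) := fun z hz => by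
    rw [ncard_pairs_mul_inv_eq _ hz, setOf_mem_neighborSet_one_and_mul_mem hΓ,
      Set.ncard_eq_toFinset_card', Set.toFinset_card]
  refine ⟨by rw [Nat.card_eq_fintype_card, hsrg.card], ?_, fun z hz hzD => ?_,
    fun z hz hzD => ?_⟩
  · rw [Set.ncard_eq_toFinset_card', Set.toFinset_card, Γ.card_neighborSet_eq_degree,
      hsrg.regular]
  · rw [hcount z hz, hsrg.of_adj _ _ ((adj_one_inv_iff hΓ).mpr hzD)]
  · rw [hcount z hz, hsrg.of_not_adj (inv_ne_one.mpr hz).symm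
      (mt (adj_one_inv_iff hΓ).mp hzD)]

end SimpleGraph

theorem pds_from_partial_geometry_singer_general
    (G : Type*) [CommGroup G] [Fintype G] [DecidableEq G]
    (s t α : ℕ) (hα : 0 < α)
    (𝓛 : Set (Finset G)) (hpg : IsPGSinger G 𝓛 s t α)
    (D : Set G) (hD : D = {g : G | g ≠ 1 ∧ ∃ L ∈ 𝓛, (1 : G) ∈ L ∧ g ∈ L}) :
    α ∣ (s + 1) * (s * t + α) ∧
    IsPDS D ((s + 1) * (s * t + α) / α) (s * (t + 1)) (s - 1 + t * (α - 1)) (α * (t + 1)) ∧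
    IsRegularPDS D := by
  classical
  have hD' : D = (PartialGeometry.collinearityGraph 𝓛).neighborSet 1 := by
    ext g
    simp [hD, ne_comm]
  have hcard := hpg.mul_card_eq
  have hv : (s + 1) * (s * t + α) / α = Fintype.card G := by
    rw [← hcard, Nat.mul_div_cancel_left _ hα]
  rw [hD', hv]
  exact ⟨⟨_, hcard.symm⟩,
    hpg.isSRGWith_collinearityGraph.isPDS_neighborSet_one hpg.collinearityGraph_adj_mul_iff,
    SimpleGraph.isRegularPDS_neighborSet_one hpg.collinearityGraph_adj_mul_iff⟩

/-- if `(G,𝓛)` is a `pg(s,t,α)` with abelian Singer group `G`, then the union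
of the `t+1` lines through the identity, with the identity removed, is a regular partial
difference set with parameters `v = (s+1)(st+α)/α`, `k = s(t+1)`, `λ = s-1+t(α-1)`,
`μ = α(t+1)`. -/
theorem pds_from_partial_geometry_singer
    (G : Type*) [CommGroup G] [Fintype G] [DecidableEq G]
    (s t α : ℕ) (hs : 0 < s) (ht : 0 < t) (hα : 0 < α)
    (𝓛 : Set (Finset G)) (hpg : IsPGSinger G 𝓛 s t α)
    (D : Set G) (hD : D = {g : G | g ≠ 1 ∧ ∃ L ∈ 𝓛, (1 : G) ∈ L ∧ g ∈ L}) :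
    α ∣ (s + 1) * (s * t + α) ∧
    IsPDS D ((s + 1) * (s * t + α) / α) (s * (t + 1)) (s - 1 + t * (α - 1)) (α * (t + 1)) ∧
    IsRegularPDS D :=
  pds_from_partial_geometry_singer_general G s t α hα 𝓛 hpg D hD
end

section
/- Let s, t, α be positive integers with 2 ≤ α, α < s and α < t, and let G be a finite abelian group with line set 𝓛 making (G,𝓛) a proper partial geometry pg(s,t,α) admitting G as an abelian Singer group, such that the pair is of rigid type (axioms (i)–(vi) of the encoding). Then there exists a positive integer x such that t + 1 = x(s + 1). -/
/-- (vi) The pair `(S,G)` is of rigid type: every line has trivial stabilizer in `G`. -/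
def RigidType (G : Type*) [CommGroup G] [DecidableEq G] (𝓛 : Set (Finset G)) : Prop :=
  ∀ g : G, ∀ L ∈ 𝓛, L.image (fun y => g * y) = L → g = 1

/-!
Translation by `G` permutes the lines, and rigidity makes it act freely on them. Through a
fixed point `x`, the lines of the orbit of a line `L` are the translates `(x * y⁻¹) • L` with
`y ∈ L`, and these are pairwise distinct, so each line orbit meeting `x` contributes exactly
`s + 1` of the `t + 1` lines through `x`.
-/

open Pointwise

-- `g • L` is definitionally `L.image (g * ·)`, the translation used in `IsPGSinger` and `RigidType`.

theorem Set.ncard_eq_ncard_image_mul_of_ncard_fiber {α β : Type*} {s : Set α} (hs : s.Finite)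
    (f : α → β) {n : ℕ} (h : ∀ a ∈ s, {b ∈ s | f b = f a}.ncard = n) :
    s.ncard = (f '' s).ncard * n := by
  classical
  lift s to Finset α using hs
  rw [Set.ncard_coe_finset, Finset.card_eq_sum_card_image f s, ← Finset.coe_image,
    Set.ncard_coe_finset, Finset.sum_const_nat]
  rintro _ hb
  obtain ⟨a, ha, rfl⟩ := Finset.mem_image.mp hb
  rw [← h a ha, ← Set.ncard_coe_finset, Finset.coe_filter]
  rfl

theorem Finset.ncard_setOf_mem_orbit_of_mem_eq_card {G : Type*} [Group G] [DecidableEq G]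
    {L : Finset G} (hL : Function.Injective (fun g : G => g • L)) (x : G) :
    {M ∈ MulAction.orbit G L | x ∈ M}.ncard = L.card := by
  have hpts : {g : G | x ∈ g • L} = (fun y => x * y⁻¹) '' L := by
    ext g
    simp only [Set.mem_ofPred_eq, Finset.mem_smul_finset, smul_eq_mul, Set.mem_image,
      Finset.mem_coe, mul_inv_eq_iff_eq_mul]
    exact exists_congr fun y => and_congr_right fun _ => eq_comm
  have hlines : {M ∈ MulAction.orbit G L | x ∈ M} = (fun g : G => g • L) '' {g | x ∈ g • L} := by
    ext M
    simp only [Set.mem_ofPred_eq, MulAction.mem_orbit_iff, Set.mem_image]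
    constructor
    · rintro ⟨⟨g, rfl⟩, hx⟩
      exact ⟨g, hx, rfl⟩
    · rintro ⟨g, hx, rfl⟩
      exact ⟨⟨g, rfl⟩, hx⟩
  rw [hlines, Set.ncard_image_of_injective _ hL, hpts,
    Set.ncard_image_of_injective _ fun y z h => by simpa using h, Set.ncard_coe_finset]

section

variable {G : Type*} [CommGroup G] [DecidableEq G] {𝓛 : Set (Finset G)} {L : Finset G}

theorem IsPGSinger.orbit_subset {s t α : ℕ} (hpg : IsPGSinger G 𝓛 s t α) (hL : L ∈ 𝓛) :
    MulAction.orbit G L ⊆ 𝓛 := by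
  rintro _ ⟨g, rfl⟩
  exact hpg.translate g L hL

theorem RigidType.smul_injective (hrig : RigidType G 𝓛) (hL : L ∈ 𝓛) :
    Function.Injective (fun g : G => g • L) := by
  intro g h hgh
  have hfix : (h⁻¹ * g) • L = L := by
    rw [mul_smul]
    exact inv_smul_eq_iff.mpr hgh
  exact (inv_mul_eq_one.mp (hrig _ L hL hfix)).symm

theorem IsPGSinger.ncard_linesThrough_orbit_eq {s t α : ℕ} (hpg : IsPGSinger G 𝓛 s t α)
    (hrig : RigidType G 𝓛) (x : G) (hL : L ∈ 𝓛) :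
    {M ∈ {M | M ∈ 𝓛 ∧ x ∈ M} | MulAction.orbit G M = MulAction.orbit G L}.ncard = s + 1 := by
  have hfiber : {M ∈ {M | M ∈ 𝓛 ∧ x ∈ M} | MulAction.orbit G M = MulAction.orbit G L} =
      {M ∈ MulAction.orbit G L | x ∈ M} := by
    ext M
    simp only [Set.mem_ofPred_eq, MulAction.orbit_eq_iff]
    exact ⟨fun ⟨⟨_, hx⟩, hML⟩ => ⟨hML, hx⟩, fun ⟨hML, hx⟩ => ⟨⟨hpg.orbit_subset hL hML, hx⟩, hML⟩⟩
  rw [hfiber, Finset.ncard_setOf_mem_orbit_of_mem_eq_card (hrig.smul_injective hL),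
    hpg.line_card L hL]

end

theorem rigid_type_t_multiple_general
    (G : Type*) [CommGroup G] [DecidableEq G]
    (s t α : ℕ)
    (𝓛 : Set (Finset G)) (hpg : IsPGSinger G 𝓛 s t α) (hrig : RigidType G 𝓛) :
    ∃ x : ℕ, 0 < x ∧ t + 1 = x * (s + 1) := by
  have hdeg : {L | L ∈ 𝓛 ∧ (1 : G) ∈ L}.ncard = t + 1 := hpg.point_deg 1
  have hfin : {L | L ∈ 𝓛 ∧ (1 : G) ∈ L}.Finite := Set.finite_of_ncard_pos (by omega)
  have hcount := Set.ncard_eq_ncard_image_mul_of_ncard_fiber hfin (MulAction.orbit G)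
    fun L hL => hpg.ncard_linesThrough_orbit_eq hrig 1 hL.1
  rw [hdeg] at hcount
  refine ⟨_, Nat.pos_of_ne_zero fun h0 => ?_, hcount⟩
  rw [h0, zero_mul] at hcount
  omega

/-- for a proper `pg(s,t,α)` of rigid type with abelian Singer group `G`,
`t+1` is a positive multiple of `s+1`. -/
theorem rigid_type_t_multiple
    (G : Type*) [CommGroup G] [Fintype G] [DecidableEq G]
    (s t α : ℕ) (hα2 : 2 ≤ α) (hαs : α < s) (hαt : α < t)
    (𝓛 : Set (Finset G)) (hpg : IsPGSinger G 𝓛 s t α) (hrig : RigidType G 𝓛) :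
    ∃ x : ℕ, 0 < x ∧ t + 1 = x * (s + 1) :=
  rigid_type_t_multiple_general G s t α 𝓛 hpg hrig
end

section
/- Let D be a regular (v,k,λ,μ)-partial difference set in a finite abelian group G, and assume Δ = (λ−μ)² + 4(k−μ) is a perfect square. Let g ∈ G be an element of order r, and let s be a positive integer with gcd(s,r) = 1. Then g ∈ D if and only if gˢ ∈ D. -/
/-- `D` is a trivial PDS: `D ∪ {1}` or `G \ D` is a subgroup of `G`. -/
def IsTrivialPDS {G : Type*} [Group G] (D : Set G) : Prop :=
  (∃ H : Subgroup G, D ∪ {1} = (H : Set G)) ∨ ∃ H : Subgroup G, Dᶜ = (H : Set G)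

/-
For a nontrivial character `χ` of `G`, the regularity `D = D⁻¹` and the PDS counting give
`χ(D)² = (λ - μ) χ(D) + (k - μ)`, whose roots are rational because `Δ` is a square. Hence for
`t` coprime to `|G|` the Galois automorphism `ζ ↦ ζ^t` of `ℚ(ζ_|G|)` fixes `χ(D)`, that is
`χ(D^(t)) = χ(D)` for every `χ`, and Fourier inversion on `G` gives `D^(t) = D`. Finally `s` may be
replaced by some `t ≡ s [MOD ord g]` coprime to `|G|`.
-/

open Finset

theorem Nat.exists_coprime_modEq_of_dvd {r n s : ℕ} [NeZero n] (hrn : r ∣ n)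
    (hs : s.Coprime r) : ∃ t, t.Coprime n ∧ t ≡ s [MOD r] := by
  obtain ⟨u, hu⟩ := ZMod.unitsMap_surjective hrn (ZMod.unitOfCoprime s hs)
  refine ⟨(u : ZMod n).val, ZMod.val_coe_unit_coprime u, ?_⟩
  rw [← ZMod.natCast_eq_natCast_iff, ZMod.natCast_val, ← ZMod.unitsMap_val hrn, hu,
    ZMod.coe_unitOfCoprime]

theorem exists_ratCast_eq_of_sq_eq {K : Type*} [Field K] [CharZero K] {x : K} {a b δ : ℤ}
    (hx : x ^ 2 = a * x + b) (hδ : a ^ 2 + 4 * b = δ ^ 2) : ∃ q : ℚ, x = q := by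
  have hδK : (a : K) ^ 2 + 4 * b = (δ : K) ^ 2 := by exact_mod_cast hδ
  have hroots : (2 * x - a - δ) * (2 * x - a + δ) = 0 := by
    linear_combination 4 * hx + hδK
  rcases mul_eq_zero.mp hroots with h | h
  · exact ⟨(a + δ) / 2, by push_cast; linear_combination h / 2⟩
  · exact ⟨(a - δ) / 2, by push_cast; linear_combination h / 2⟩

theorem IsCyclotomicExtension.hasEnoughRootsOfUnity (n : ℕ) [NeZero n] (A K : Type*)
    [CommRing A] [Field K] [Algebra A K] [IsCyclotomicExtension {n} A K] :
    HasEnoughRootsOfUnity K n :=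
  ⟨⟨_, zeta_spec n A K⟩, inferInstance⟩

theorem IsCyclotomicExtension.Rat.exists_algEquiv_apply_eq_pow {n : ℕ} [NeZero n]
    {K : Type*} [Field K] [NumberField K] [IsCyclotomicExtension {n} ℚ K] {t : ℕ}
    (ht : t.Coprime n) : ∃ σ : K ≃ₐ[ℚ] K, ∀ x : K, x ^ n = 1 → σ x = x ^ t := by
  refine ⟨(galEquivZMod n K).symm (ZMod.unitOfCoprime t ht), fun x hx => ?_⟩
  rw [galEquivZMod_apply_of_pow_eq n K _ hx, MulEquiv.apply_symm_apply,
    ZMod.coe_unitOfCoprime, ZMod.val_natCast, ← pow_eq_pow_mod t hx]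

theorem sum_apply_pow_eq_of_eq_ratCast {G K : Type*} [Field K] [Group G] [Finite G] (σ : K →+* K)
    {t : ℕ} (hσ : ∀ x : K, x ^ Nat.card G = 1 → σ x = x ^ t) (χ : G →* Kˣ) {A : Finset G}
    {q : ℚ} (hq : ∑ x ∈ A, (χ x : K) = q) :
    ∑ x ∈ A, (χ (x ^ t) : K) = ∑ x ∈ A, (χ x : K) := by
  have hroot (x : G) : (χ x : K) ^ Nat.card G = 1 := by
    rw [← Units.val_pow_eq_pow_val, ← map_pow, pow_card_eq_one', map_one, Units.val_one]
  calc ∑ x ∈ A, (χ (x ^ t) : K) = ∑ x ∈ A, σ (χ x) :=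
        sum_congr rfl fun x _ => by rw [hσ _ (hroot x), map_pow, Units.val_pow_eq_pow_val]
    _ = ∑ x ∈ A, (χ x : K) := by rw [← map_sum, hq, map_ratCast]

section DualGroup

variable {G R : Type*} [CommGroup G] [Finite G] [CommRing R] [IsDomain R]
  [HasEnoughRootsOfUnity R (Monoid.exponent G)]

theorem sum_monoidHom_apply [DecidableEq G] [Fintype (G →* Rˣ)] (x : G) :
    ∑ χ : G →* Rˣ, (χ x : R) = if x = 1 then (Nat.card G : R) else 0 := by
  split_ifs with hx
  · simp [hx, ← Nat.card_eq_fintype_card, CommGroup.card_monoidHom_of_hasEnoughRootsOfUnity]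
  · obtain ⟨χ, hχ⟩ := CommGroup.exists_apply_ne_one_of_hasEnoughRootsOfUnity G R hx
    have hev : (Units.coeHom R).comp (MonoidHom.eval x) ≠ 1 := fun h =>
      hχ (Units.ext (DFunLike.congr_fun h χ))
    exact sum_hom_units_eq_zero _ hev

theorem sum_monoidHom_inv_mul_sum [DecidableEq G] [Fintype (G →* Rˣ)] (A : Finset G) (y : G) :
    ∑ χ : G →* Rˣ, (χ y⁻¹ : R) * ∑ x ∈ A, (χ x : R) =
      if y ∈ A then (Nat.card G : R) else 0 := by
  calc ∑ χ : G →* Rˣ, (χ y⁻¹ : R) * ∑ x ∈ A, (χ x : R)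
      = ∑ x ∈ A, ∑ χ : G →* Rˣ, (χ (x * y⁻¹) : R) := by
        simp only [mul_sum, map_mul, Units.val_mul, mul_comm]
        exact sum_comm
    _ = ∑ x ∈ A, if x = y then (Nat.card G : R) else 0 := by
        simp only [sum_monoidHom_apply, mul_inv_eq_one]
    _ = _ := sum_ite_eq' A y _

theorem Finset.eq_of_forall_sum_monoidHom_eq [CharZero R] {A B : Finset G}
    (h : ∀ χ : G →* Rˣ, ∑ x ∈ A, (χ x : R) = ∑ x ∈ B, (χ x : R)) : A = B := by
  classical
  have := Fintype.ofFinite (G →* Rˣ)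
  ext y
  have hy : (if y ∈ A then (Nat.card G : R) else 0) = if y ∈ B then (Nat.card G : R) else 0 := by
    simp only [← sum_monoidHom_inv_mul_sum, h]
  have hG : (Nat.card G : R) ≠ 0 := Nat.cast_ne_zero.mpr Nat.card_pos.ne'
  by_cases hA : y ∈ A <;> by_cases hB : y ∈ B <;> simp [hA, hB, hG, hG.symm] at hy ⊢

end DualGroup

theorem sum_mul_sum_inv_eq_sum_card_mul {G S : Type*} [Group G] [Fintype G] [DecidableEq G]
    [CommSemiring S] (ψ : G →* S) (A : Finset G) :
    (∑ a ∈ A, ψ a) * ∑ b ∈ A, ψ b⁻¹ = ∑ z, #{p ∈ A ×ˢ A | p.1 * p.2⁻¹ = z} * ψ z := by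
  calc (∑ a ∈ A, ψ a) * ∑ b ∈ A, ψ b⁻¹ = ∑ p ∈ A ×ˢ A, ψ (p.1 * p.2⁻¹) := by
        simp only [sum_mul_sum, sum_product, map_mul]
    _ = ∑ z, ∑ p ∈ A ×ˢ A with p.1 * p.2⁻¹ = z, ψ (p.1 * p.2⁻¹) := (sum_fiberwise _ _ _).symm
    _ = _ := sum_congr rfl fun z _ => by
        rw [sum_congr rfl fun p hp => by rw [(mem_filter.mp hp).2], sum_const, nsmul_eq_mul]

theorem IsPDS.card_filter_mul_inv_eq {G : Type*} [Group G] [DecidableEq G] {A : Finset G}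
    {v k lam mu : ℕ} (hA : IsPDS (A : Set G) v k lam mu) (z : G) :
    #{p ∈ A ×ˢ A | p.1 * p.2⁻¹ = z} = if z = 1 then k else if z ∈ A then lam else mu := by
  obtain ⟨-, hk, hlam, hmu⟩ := hA
  split_ifs with hz hzA
  · subst hz
    have hdiag : {p ∈ A ×ˢ A | p.1 * p.2⁻¹ = 1} = A.diag := by
      ext p
      simp only [mem_filter, mem_product, mem_diag, mul_inv_eq_one]
      exact ⟨fun h => ⟨h.1.1, h.2⟩, fun h => ⟨⟨h.1, h.2 ▸ h.1⟩, h.2⟩⟩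
    rw [hdiag, diag_card, ← hk, Set.ncard_coe_finset]
  all_goals
    have hset : (({p ∈ A ×ˢ A | p.1 * p.2⁻¹ = z} : Finset (G × G)) : Set (G × G)) =
        {p : G × G | p.1 ∈ (A : Set G) ∧ p.2 ∈ (A : Set G) ∧ p.1 ≠ p.2 ∧ p.1 * p.2⁻¹ = z} := by
      ext p
      simp only [coe_filter, mem_product, Set.mem_ofPred_eq, mem_coe, and_assoc]
      refine and_congr_right fun _ => and_congr_right fun _ => ⟨fun h => ⟨?_, h⟩, And.right⟩
      exact fun hp => hz (by rw [← h, hp, mul_inv_cancel])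
    rw [← Set.ncard_coe_finset, hset]
  · exact hlam z hz hzA
  · exact hmu z hz hzA

theorem IsPDS.sum_sq_eq {G R : Type*} [Group G] [Fintype G] [CommRing R] [IsDomain R]
    {A : Finset G} {v k lam mu : ℕ} (hA : IsPDS (A : Set G) v k lam mu)
    (hreg : IsRegularPDS (A : Set G)) {ψ : G →* R} (hψ : ψ ≠ 1) :
    (∑ a ∈ A, ψ a) ^ 2 = ((lam : R) - mu) * ∑ a ∈ A, ψ a + ((k : R) - mu) := by
  classical
  have hinv : ∑ b ∈ A, ψ b⁻¹ = ∑ a ∈ A, ψ a :=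
    sum_equiv (Equiv.inv G) (fun b => ⟨hreg.2 b, fun h => inv_inv b ▸ hreg.2 _ h⟩)
      fun _ _ => rfl
  have hcount (z : G) : (#{p ∈ A ×ˢ A | p.1 * p.2⁻¹ = z} : R) =
      mu + (if z ∈ A then (lam : R) - mu else 0) + if z = 1 then (k : R) - mu else 0 := by
    rw [hA.card_filter_mul_inv_eq]
    by_cases hz : z = 1
    · subst hz
      simp [show (1 : G) ∉ A from hreg.1]
    · by_cases hzA : z ∈ A <;> simp [hz, hzA]
  calc (∑ a ∈ A, ψ a) ^ 2 = (∑ a ∈ A, ψ a) * ∑ b ∈ A, ψ b⁻¹ := by rw [sq, hinv]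
    _ = ∑ z, #{p ∈ A ×ˢ A | p.1 * p.2⁻¹ = z} * ψ z := sum_mul_sum_inv_eq_sum_card_mul ψ A
    _ = ∑ z, (mu * ψ z + (if z ∈ A then ((lam : R) - mu) * ψ z else 0)
          + if z = 1 then ((k : R) - mu) * ψ z else 0) :=
        sum_congr rfl fun z _ => by rw [hcount]; split_ifs <;> ring
    _ = _ := by
        rw [sum_add_distrib, sum_add_distrib, ← mul_sum, sum_hom_units_eq_zero ψ hψ, sum_ite_mem,
          univ_inter, sum_ite_eq', if_pos (mem_univ _), ← mul_sum, map_one]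
        ring

theorem IsPDS.exists_ratCast_sum_eq {G K : Type*} [Field K] [CharZero K] [Group G] [Fintype G]
    {A : Finset G} {v k lam mu : ℕ} (hA : IsPDS (A : Set G) v k lam mu)
    (hreg : IsRegularPDS (A : Set G))
    (hΔ : ∃ δ : ℤ, ((lam : ℤ) - mu) ^ 2 + 4 * ((k : ℤ) - mu) = δ ^ 2) (χ : G →* Kˣ) :
    ∃ q : ℚ, ∑ x ∈ A, (χ x : K) = q := by
  obtain ⟨δ, hδ⟩ := hΔ
  by_cases hχ : χ = 1
  · refine ⟨k, ?_⟩
    rw [hχ, ← hA.2.1, Set.ncard_coe_finset]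
    simp
  have hψ : (Units.coeHom K).comp χ ≠ 1 := fun h =>
    hχ (MonoidHom.ext fun x => Units.ext (DFunLike.congr_fun h x))
  refine exists_ratCast_eq_of_sq_eq (a := lam - mu) (b := k - mu) ?_ hδ
  push_cast
  exact hA.sum_sq_eq hreg hψ

theorem IsPDS.pow_mem_iff_of_coprime {G : Type*} [CommGroup G] [Fintype G] {A : Finset G}
    {v k lam mu : ℕ} (hA : IsPDS (A : Set G) v k lam mu) (hreg : IsRegularPDS (A : Set G))
    (hΔ : ∃ δ : ℤ, ((lam : ℤ) - mu) ^ 2 + 4 * ((k : ℤ) - mu) = δ ^ 2) {t : ℕ}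
    (ht : t.Coprime (Nat.card G)) (g : G) : g ^ t ∈ A ↔ g ∈ A := by
  let K := CyclotomicField (Nat.card G) ℚ
  have : IsCyclotomicExtension {Nat.card G} ℚ K := CyclotomicField.isCyclotomicExtension _ _
  have : HasEnoughRootsOfUnity K (Monoid.exponent G) :=
    have := IsCyclotomicExtension.hasEnoughRootsOfUnity (Nat.card G) ℚ K
    HasEnoughRootsOfUnity.of_dvd K Group.exponent_dvd_nat_card
  obtain ⟨σ, hσ⟩ := IsCyclotomicExtension.Rat.exists_algEquiv_apply_eq_pow (K := K) ht
  have hA_pow : A.map (powCoprime ht.symm).toEmbedding = A :=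
    Finset.eq_of_forall_sum_monoidHom_eq (R := K) fun χ => by
      obtain ⟨q, hq⟩ := hA.exists_ratCast_sum_eq hreg hΔ χ
      rw [sum_map]
      exact sum_apply_pow_eq_of_eq_ratCast σ.toRingHom hσ χ hq
  conv_lhs => rw [← hA_pow]
  exact mem_map' (powCoprime ht.symm).toEmbedding

theorem local_multiplier_theorem_general
    (G : Type*) [CommGroup G] [Fintype G] (v k lam mu : ℕ) (D : Set G)
    (hpds : IsPDS D v k lam mu) (hreg : IsRegularPDS D)
    (hΔ : ∃ δ : ℤ, ((lam : ℤ) - mu) ^ 2 + 4 * ((k : ℤ) - mu) = δ ^ 2)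
    (g : G) (r : ℕ) (hr : r = orderOf g)
    (s : ℕ) (hcop : Nat.gcd s r = 1) :
    g ∈ D ↔ g ^ s ∈ D := by
  lift D to Finset G using D.toFinite
  obtain ⟨t, ht, hts⟩ := Nat.exists_coprime_modEq_of_dvd (hr ▸ orderOf_dvd_natCard g) hcop
  rw [Finset.mem_coe, Finset.mem_coe, ← pow_eq_pow_iff_modEq.mpr (hr ▸ hts),
    hpds.pow_mem_iff_of_coprime hreg hΔ ht]

/-- Local Multiplier Theorem: let `D` be a regular `(v,k,λ,μ)` PDS in a
finite abelian group `G` with `Δ = (λ-μ)² + 4(k-μ)` a perfect square.  If `g ∈ G` has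
order `r` and `s` is a positive integer coprime to `r`, then `g ∈ D ↔ g^s ∈ D`. -/
theorem local_multiplier_theorem
    (G : Type*) [CommGroup G] [Fintype G] (v k lam mu : ℕ) (D : Set G)
    (hpds : IsPDS D v k lam mu) (hreg : IsRegularPDS D)
    (hΔ : ∃ δ : ℤ, ((lam : ℤ) - mu) ^ 2 + 4 * ((k : ℤ) - mu) = δ ^ 2)
    (g : G) (r : ℕ) (hr : r = orderOf g)
    (s : ℕ) (hs : 0 < s) (hcop : Nat.gcd s r = 1) :
    g ∈ D ↔ g ^ s ∈ D :=
  local_multiplier_theorem_general G v k lam mu D hpds hreg hΔ g r hr s hcop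
end

section
/- Let D be a regular (v,k,λ,μ)-partial difference set in a finite abelian group G, let N be a subgroup of G, and set k₁ = |N ∩ D|. For each coset C of N in G write B_C = |C ∩ D|. Then (1) the sum of B_C over all cosets C of N equals k, and (2) the sum of B_C(B_C − 1) over all cosets C of N equals k₁·λ + (|N| − 1 − k₁)·μ. -/
open Finset

theorem Finset.sum_card_fiber_mul_pred_eq_card_offDiag_filter {α β : Type*} [DecidableEq α]
    [DecidableEq β] [Fintype β] (s : Finset α) (f : α → β) :
    ∑ b, #{a ∈ s | f a = b} * (#{a ∈ s | f a = b} - 1) =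
      #{p ∈ s.offDiag | f p.1 = f p.2} := by
  rw [card_eq_sum_card_fiberwise (f := fun p ↦ f p.1) (t := univ) fun _ _ ↦ mem_univ _]
  refine sum_congr rfl fun b _ ↦ ?_
  have hfiber :
      {p ∈ {p ∈ s.offDiag | f p.1 = f p.2} | f p.1 = b} = {a ∈ s | f a = b}.offDiag := by
    ext p
    simp only [mem_filter, mem_offDiag]
    grind
  rw [hfiber, offDiag_card, Nat.mul_sub_one]

theorem Finset.sum_ite_eq_card_filter_mul_add {α : Type*} (t : Finset α) (P : α → Prop)
    [DecidablePred P] (a b : ℕ) :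
    ∑ z ∈ t, (if P z then a else b) = #{z ∈ t | P z} * a + (#t - #{z ∈ t | P z}) * b := by
  rw [sum_ite, sum_const, sum_const, smul_eq_mul, smul_eq_mul,
    ← card_filter_add_card_filter_not (s := t) P, Nat.add_sub_cancel_left]

theorem Subgroup.card_filter_mem_ne_one {G : Type*} [Group G] [Fintype G] [DecidableEq G]
    (N : Subgroup G) [DecidablePred (· ∈ N)] :
    #({z | z ∈ N ∧ z ≠ 1} : Finset G) = Nat.card N - 1 := by
  have : ({z | z ∈ N ∧ z ≠ 1} : Finset G) = ({z | z ∈ N} : Finset G).erase 1 := by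
    ext z
    simp [and_comm]
  rw [this, card_erase_of_mem (by simp [N.one_mem]), ← Fintype.card_subtype,
    Nat.card_eq_fintype_card]

theorem Subgroup.sum_filter_ne_one_ite_mem {G : Type*} [Group G] [Fintype G] [DecidableEq G]
    (N : Subgroup G) [DecidablePred (· ∈ N)] {D : Set G} [DecidablePred (· ∈ D)]
    (hD : (1 : G) ∉ D) (a b : ℕ) :
    ∑ z ∈ ({z | z ∈ N ∧ z ≠ 1} : Finset G), (if z ∈ D then a else b) =
      ((N : Set G) ∩ D).ncard * a + (Nat.card N - 1 - ((N : Set G) ∩ D).ncard) * b := by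
  have hinter :
      #{z ∈ ({z | z ∈ N ∧ z ≠ 1} : Finset G) | z ∈ D} = ((N : Set G) ∩ D).ncard := by
    rw [filter_filter, ← Set.ncard_coe_finset]
    congr 1
    ext z
    simp only [coe_filter, mem_univ, true_and, Set.mem_ofPred_eq, Set.mem_inter_iff,
      SetLike.mem_coe]
    refine ⟨fun h ↦ ⟨h.1.1, h.2⟩, fun h ↦ ⟨⟨h.1, ?_⟩, h.2⟩⟩
    rintro rfl
    exact hD h.2
  rw [sum_ite_eq_card_filter_mul_add, N.card_filter_mem_ne_one, hinter]

theorem card_offDiag_filter_coset_eq_sum {G : Type*} [CommGroup G] [Fintype G]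
    [DecidableEq G] (s : Finset G) (N : Subgroup G) [DecidablePred (· ∈ N)] :
    #{p ∈ s.offDiag | (p.1 : G ⧸ N) = p.2} =
      ∑ z ∈ {z | z ∈ N ∧ z ≠ 1}, #{p ∈ s.offDiag | p.1 * p.2⁻¹ = z} := by
  have hcoset (p : G × G) : (p.1 : G ⧸ N) = p.2 ↔ p.1 * p.2⁻¹ ∈ N := by
    rw [QuotientGroup.eq_iff_div_mem, div_eq_mul_inv]
  rw [filter_congr fun p _ ↦ hcoset p]
  refine (card_eq_sum_card_fiberwise (f := fun p ↦ p.1 * p.2⁻¹) fun p hp ↦ ?_).trans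
    (sum_congr rfl fun z hz ↦ ?_)
  · simp only [coe_filter, Set.mem_ofPred_eq, mem_offDiag] at hp
    simpa [mul_inv_eq_one] using And.intro hp.2 hp.1.2.2
  · rw [filter_filter]
    refine congrArg card (filter_congr fun p _ ↦ ?_)
    simp only [mem_filter, mem_univ, true_and] at hz
    constructor
    · exact And.right
    · rintro rfl
      exact ⟨hz.1, rfl⟩

theorem IsPDS.card_offDiag_filter_mul_inv_eq {G : Type*} [Group G] [Fintype G] [DecidableEq G]
    {D : Set G} [DecidablePred (· ∈ D)] {v k lam mu : ℕ} (hD : IsPDS D v k lam mu) {z : G}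
    (hz : z ≠ 1) :
    #{p ∈ D.toFinset.offDiag | p.1 * p.2⁻¹ = z} = if z ∈ D then lam else mu := by
  have hpairs : #{p ∈ D.toFinset.offDiag | p.1 * p.2⁻¹ = z} =
      {p : G × G | p.1 ∈ D ∧ p.2 ∈ D ∧ p.1 ≠ p.2 ∧ p.1 * p.2⁻¹ = z}.ncard := by
    rw [← Set.ncard_coe_finset]
    congr 1
    ext p
    simp [and_assoc]
  rw [hpairs]
  split_ifs with hzD
  exacts [hD.2.2.1 z hz hzD, hD.2.2.2 z hz hzD]

/-- coset counts: let `D` be a regular `(v,k,λ,μ)` PDS in a finite abelian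
group `G`, `N ≤ G` a subgroup and `k₁ = |N ∩ D|`.  For a coset `C` of `N` write
`B_C = |C ∩ D|`.  Then `∑_C B_C = k` and `∑_C B_C(B_C - 1) = k₁λ + (|N|-1-k₁)μ`. -/
theorem pds_coset_counts
    (G : Type*) [CommGroup G] [Fintype G] (v k lam mu : ℕ) (D : Set G)
    (hpds : IsPDS D v k lam mu) (hreg : IsRegularPDS D)
    (N : Subgroup G) (k₁ : ℕ) (hk₁ : k₁ = ((N : Set G) ∩ D).ncard)
    (B : G ⧸ N → ℕ)
    (hB : ∀ C : G ⧸ N, B C = {g : G | g ∈ D ∧ (g : G ⧸ N) = C}.ncard) :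
    (∑ᶠ C : G ⧸ N, B C) = k ∧
    (∑ᶠ C : G ⧸ N, B C * (B C - 1)) = k₁ * lam + (Nat.card N - 1 - k₁) * mu := by
  classical
  set s := D.toFinset
  have hBs (C : G ⧸ N) : B C = #{g ∈ s | QuotientGroup.mk g = C} := by
    rw [hB, ← Set.ncard_coe_finset]
    congr 1
    ext g
    simp [s]
  refine ⟨?_, ?_⟩
  · rw [finsum_eq_sum_of_fintype, ← hpds.2.1, Set.ncard_eq_toFinset_card',
      card_eq_sum_card_fiberwise (f := ((↑) : G → G ⧸ N)) (t := univ) fun _ _ ↦ mem_univ _]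
    exact sum_congr rfl fun C _ ↦ hBs C
  · calc ∑ᶠ C : G ⧸ N, B C * (B C - 1)
        = ∑ C, #{g ∈ s | QuotientGroup.mk g = C} *
            (#{g ∈ s | QuotientGroup.mk g = C} - 1) := by
          simp only [finsum_eq_sum_of_fintype, hBs]
      _ = #{p ∈ s.offDiag | (p.1 : G ⧸ N) = p.2} :=
          s.sum_card_fiber_mul_pred_eq_card_offDiag_filter _
      _ = ∑ z ∈ {z | z ∈ N ∧ z ≠ 1}, #{p ∈ s.offDiag | p.1 * p.2⁻¹ = z} :=
          card_offDiag_filter_coset_eq_sum s N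
      _ = ∑ z ∈ {z | z ∈ N ∧ z ≠ 1}, if z ∈ D then lam else mu :=
          sum_congr rfl fun z hz ↦ hpds.card_offDiag_filter_mul_inv_eq (mem_filter.1 hz).2.2
      _ = k₁ * lam + (Nat.card N - 1 - k₁) * mu := by
          rw [N.sum_filter_ne_one_ite_mem hreg.1, hk₁]
end
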